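/- Let X be a real smooth Banach space, i.e. for every unit vector u ∈ X there is a unique continuous linear functional f with ‖f‖ = 1 and f(u) = 1. Let A be a bounded linear operator on X with ‖A‖ = 1, and let x, y be unit vectors at which A attains its norm (x, y ∈ M_A). Then x is norm-parallel to y if and only if Ax is norm-parallel to Ay. -/

import Mathlib

/-!
If `‖x + w‖ = ‖x‖ + ‖w‖`, a norming functional `f` of `x + w` norms `x` and `w` separately.
A norming functional `g` of `A x` gives a second functional `g ∘ A` norming `x`, so smoothness
at `x` forces `f = g ∘ A`; then `g` norms `A x` and `A w` simultaneously, which makes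
`‖A x + A w‖ = ‖A x‖ + ‖A w‖`. Conversely, since `A` is a contraction that is isometric on `x`
and `y`, `‖x‖ + ‖y‖ = ‖A x + A y‖ ≤ ‖x + y‖`.
-/

section

variable {E F : Type*} [SeminormedAddCommGroup E] [NormedSpace ℝ E]
  [SeminormedAddCommGroup F] [NormedSpace ℝ F]

def NormParallel (u v : E) : Prop :=
  ∃ ε : ℝ, (ε = 1 ∨ ε = -1) ∧ ‖u + ε • v‖ = ‖u‖ + ‖v‖

lemma norm_smul_of_eq_one_or_eq_neg_one {ε : ℝ} (hε : ε = 1 ∨ ε = -1) (v : E) :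
    ‖ε • v‖ = ‖v‖ := by
  rcases hε with rfl | rfl <;> simp

lemma apply_le_norm_of_opNorm_le_one {f : StrongDual ℝ E} (hf : ‖f‖ ≤ 1) (u : E) :
    f u ≤ ‖u‖ :=
  calc f u ≤ ‖f u‖ := Real.le_norm_self _
    _ ≤ ‖f‖ * ‖u‖ := f.le_opNorm u
    _ ≤ ‖u‖ := mul_le_of_le_one_left (norm_nonneg u) hf

lemma opNorm_eq_one_of_apply_eq_one {f : StrongDual ℝ E} (hf : ‖f‖ ≤ 1) {x : E}
    (hx : ‖x‖ = 1) (hfx : f x = 1) : ‖f‖ = 1 := by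
  refine le_antisymm hf ?_
  simpa [hx, hfx] using f.le_opNorm x

lemma norm_add_eq_of_apply_eq_norm {f : StrongDual ℝ E} (hf : ‖f‖ ≤ 1) {u v : E}
    (hu : f u = ‖u‖) (hv : f v = ‖v‖) : ‖u + v‖ = ‖u‖ + ‖v‖ := by
  refine le_antisymm (norm_add_le u v) ?_
  calc ‖u‖ + ‖v‖ = f (u + v) := by rw [map_add, hu, hv]
    _ ≤ ‖u + v‖ := apply_le_norm_of_opNorm_le_one hf _

lemma apply_eq_norm_of_norm_add_eq {f : StrongDual ℝ E} (hf : ‖f‖ ≤ 1) {u v : E}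
    (huv : ‖u + v‖ = ‖u‖ + ‖v‖) (hfuv : f (u + v) = ‖u + v‖) :
    f u = ‖u‖ ∧ f v = ‖v‖ := by
  have hu := apply_le_norm_of_opNorm_le_one hf u
  have hv := apply_le_norm_of_opNorm_le_one hf v
  rw [map_add] at hfuv
  constructor <;> linarith

lemma norm_map_add_eq_of_unique_norming {A : E →L[ℝ] F} (hA : ‖A‖ ≤ 1) {x : E}
    (hsm : ∃! f : StrongDual ℝ E, ‖f‖ = 1 ∧ f x = 1) (hx : ‖x‖ = 1) (hAx : ‖A x‖ = 1)
    {w : E} (hxw : ‖x + w‖ = ‖x‖ + ‖w‖) : ‖A x + A w‖ = ‖A x‖ + ‖A w‖ := by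
  obtain ⟨f, hf, hfxw⟩ := exists_dual_vector'' ℝ (x + w)
  obtain ⟨hfx, hfw⟩ := apply_eq_norm_of_norm_add_eq hf hxw hfxw
  obtain ⟨g, hg, hgAx⟩ := exists_dual_vector'' ℝ (A x)
  have hgA : ‖g.comp A‖ ≤ 1 :=
    (g.opNorm_comp_le A).trans (mul_le_one₀ hg (norm_nonneg A) hA)
  have hfx1 : f x = 1 := hfx.trans hx
  have hgAx1 : g.comp A x = 1 := hgAx.trans hAx
  have hfg : f = g.comp A :=
    hsm.unique ⟨opNorm_eq_one_of_apply_eq_one hf hx hfx1, hfx1⟩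
      ⟨opNorm_eq_one_of_apply_eq_one hgA hx hgAx1, hgAx1⟩
  have hgAw : g (A w) = ‖w‖ := by rw [← hfw, hfg, ContinuousLinearMap.comp_apply]
  have hAw : ‖A w‖ = ‖w‖ :=
    le_antisymm (A.le_of_opNorm_le hA w |>.trans_eq (one_mul _))
      (hgAw ▸ apply_le_norm_of_opNorm_le_one hg (A w))
  exact norm_add_eq_of_apply_eq_norm hg hgAx (hgAw.trans hAw.symm)

lemma norm_add_eq_of_norm_map_add_eq {A : E →L[ℝ] F} (hA : ‖A‖ ≤ 1) {u v : E}
    (hAu : ‖A u‖ = ‖u‖) (hAv : ‖A v‖ = ‖v‖) (h : ‖A u + A v‖ = ‖A u‖ + ‖A v‖) :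
    ‖u + v‖ = ‖u‖ + ‖v‖ := by
  refine le_antisymm (norm_add_le u v) ?_
  calc ‖u‖ + ‖v‖ = ‖A (u + v)‖ := by rw [map_add, h, hAu, hAv]
    _ ≤ ‖u + v‖ := A.le_of_opNorm_le hA _ |>.trans_eq (one_mul _)

namespace NormParallel

lemma map_of_unique_norming {A : E →L[ℝ] F} (hA : ‖A‖ ≤ 1) {x y : E}
    (hsm : ∃! f : StrongDual ℝ E, ‖f‖ = 1 ∧ f x = 1) (hx : ‖x‖ = 1) (hAx : ‖A x‖ = 1)
    (h : NormParallel x y) : NormParallel (A x) (A y) := by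
  obtain ⟨ε, hε, hxy⟩ := h
  refine ⟨ε, hε, ?_⟩
  rw [← norm_smul_of_eq_one_or_eq_neg_one hε y] at hxy
  rw [← norm_smul_of_eq_one_or_eq_neg_one hε (A y), ← map_smul]
  exact norm_map_add_eq_of_unique_norming hA hsm hx hAx hxy

lemma of_map {A : E →L[ℝ] F} (hA : ‖A‖ ≤ 1) {x y : E} (hAx : ‖A x‖ = ‖x‖)
    (hAy : ‖A y‖ = ‖y‖) (h : NormParallel (A x) (A y)) : NormParallel x y := by
  obtain ⟨ε, hε, hxy⟩ := h
  refine ⟨ε, hε, ?_⟩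
  rw [← norm_smul_of_eq_one_or_eq_neg_one hε (A y), ← map_smul] at hxy
  rw [← norm_smul_of_eq_one_or_eq_neg_one hε y]
  have hAεy : ‖A (ε • y)‖ = ‖ε • y‖ := by simp [hAy, norm_smul_of_eq_one_or_eq_neg_one hε]
  exact norm_add_eq_of_norm_map_add_eq hA hAx hAεy hxy

end NormParallel

end

theorem parallel_iff_image_parallel_smooth_general
    {X : Type*} [NormedAddCommGroup X] [NormedSpace ℝ X]
    (hsm : ∀ u : X, ‖u‖ = 1 → ∃! f : X →L[ℝ] ℝ, ‖f‖ = 1 ∧ f u = 1)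
    (A : X →L[ℝ] X) (hA : ‖A‖ = 1) (x y : X)
    (hx : ‖x‖ = 1 ∧ ‖A x‖ = ‖A‖) (hy : ‖y‖ = 1 ∧ ‖A y‖ = ‖A‖) :
    (∃ ε : ℝ, (ε = 1 ∨ ε = -1) ∧ ‖x + ε • y‖ = ‖x‖ + ‖y‖) ↔
      ∃ ε : ℝ, (ε = 1 ∨ ε = -1) ∧ ‖A x + ε • A y‖ = ‖A x‖ + ‖A y‖ := by
  rw [hA] at hx hy
  change NormParallel x y ↔ NormParallel (A x) (A y)
  exact ⟨NormParallel.map_of_unique_norming hA.le (hsm x hx.1) hx.1 hx.2,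
    NormParallel.of_map hA.le (hx.2.trans hx.1.symm) (hy.2.trans hy.1.symm)⟩

theorem parallel_iff_image_parallel_smooth
    {X : Type*} [NormedAddCommGroup X] [NormedSpace ℝ X] [CompleteSpace X]
    (hsm : ∀ u : X, ‖u‖ = 1 → ∃! f : X →L[ℝ] ℝ, ‖f‖ = 1 ∧ f u = 1)
    (A : X →L[ℝ] X) (hA : ‖A‖ = 1) (x y : X)
    (hx : ‖x‖ = 1 ∧ ‖A x‖ = ‖A‖) (hy : ‖y‖ = 1 ∧ ‖A y‖ = ‖A‖) :
    (∃ ε : ℝ, (ε = 1 ∨ ε = -1) ∧ ‖x + ε • y‖ = ‖x‖ + ‖y‖) ↔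
      ∃ ε : ℝ, (ε = 1 ∨ ε = -1) ∧ ‖A x + ε • A y‖ = ‖A x‖ + ‖A y‖ :=
  parallel_iff_image_parallel_smooth_general hsm A hA x y hx hy
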